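/- Let Z be a standard Gaussian real random variable, let 1 ≤ p < ∞, let δ > 0 and M ≥ 0, and let c_p = 1/E|Z|^p. Then E[((δZ − M)_+)^p] ≥ δ^p · e^{−(M/δ)²} · 2^{−(p+1)/2} · 1/(2c_p), where x_+ = max(x,0). -/
import Mathlib
open MeasureTheory ProbabilityTheory Real

lemma aux_integrable {p : ℝ} (hp : 0 ≤ p) {b : ℝ} (hb : 0 < b) :
    Integrable (fun x : ℝ => |x| ^ p * Real.exp (-b * x ^ 2)) := by
  have hI : IntegrableOn (fun x : ℝ => |x| ^ p * Real.exp (-b * x ^ 2)) (Set.Ici 0) := by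
    rw [integrableOn_Ici_iff_integrableOn_Ioi]
    refine (integrableOn_rpow_mul_exp_neg_mul_sq hb (by linarith : (-1:ℝ) < p)).congr_fun
      (fun x hx => ?_) measurableSet_Ioi
    rw [abs_of_pos hx]
  have hII : IntegrableOn (fun x : ℝ => |x| ^ p * Real.exp (-b * x ^ 2)) (Set.Iic 0) := by
    rw [← (Measure.measurePreserving_neg (volume : Measure ℝ)).integrableOn_comp_preimage
        (Homeomorph.neg ℝ).measurableEmbedding]
    simp only [Function.comp_def, neg_sq, abs_neg, Set.neg_preimage, Set.neg_Iic, neg_zero]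
    exact hI
  rw [← integrableOn_univ, ← Set.Iic_union_Ici (a := (0:ℝ)), integrableOn_union]
  exact ⟨hII, hI⟩

lemma gauss_int_eq (g : ℝ → ℝ) :
    ∫ z, g z ∂(gaussianReal 0 1) = ∫ z, g z * gaussianPDFReal 0 1 z := by
  rw [gaussianReal_of_var_ne_zero 0 one_ne_zero]
  have h : volume.withDensity (gaussianPDF 0 1)
      = volume.withDensity (fun x => ((Real.toNNReal (gaussianPDFReal 0 1 x)) : ENNReal)) := rfl
  rw [h, integral_withDensity_eq_integral_smul ((measurable_gaussianPDFReal 0 1).real_toNNReal) g]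
  congr 1
  ext x
  rw [NNReal.smul_def, smul_eq_mul, Real.coe_toNNReal _ (gaussianPDFReal_nonneg 0 1 x), mul_comm]

/-- For a standard Gaussian real random variable `Z`, `1 ≤ p < ∞`,
`δ > 0`, `M ≥ 0`, and `c_p = 1/E|Z|^p`, one has
`E[((δZ − M)_+)^p] ≥ δ^p · e^{−(M/δ)²} · 2^{−(p+1)/2} · 1/(2 c_p)`. -/
theorem gaussian_truncated_moment_bound
    (p δ M c : ℝ) (hp : 1 ≤ p) (hδ : 0 < δ) (hM : 0 ≤ M)
    (hc : c = (∫ z, |z| ^ p ∂(gaussianReal 0 1))⁻¹) :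
    (∫ z, (max (δ * z - M) 0) ^ p ∂(gaussianReal 0 1))
      ≥ δ ^ p * Real.exp (-(M / δ) ^ 2) * (2 : ℝ) ^ (-(p + 1) / 2) * (1 / (2 * c)) := by
  have hp0 : (0:ℝ) < p := lt_of_lt_of_le one_pos hp
  have hp0' : (0:ℝ) ≤ p := hp0.le
  set φ : ℝ → ℝ := gaussianPDFReal 0 1 with hφdef
  have hφ : ∀ x : ℝ, φ x = (Real.sqrt (2*π))⁻¹ * Real.exp (-(1/2) * x ^ 2) := by
    intro x
    rw [hφdef, gaussianPDFReal]
    push_cast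
    ring_nf
  have hφpos : ∀ x : ℝ, 0 ≤ φ x := gaussianPDFReal_nonneg 0 1
  have hφeven : ∀ x : ℝ, φ (-x) = φ x := by
    intro x; rw [hφ, hφ, neg_sq]
  set m : ℝ := M / δ with hmdef
  have hm : 0 ≤ m := div_nonneg hM hδ.le
  have hδm : δ * m = M := by rw [hmdef]; field_simp
  set s : ℝ := Real.sqrt 2 with hsdef
  have hs : 0 < s := Real.sqrt_pos.mpr two_pos
  have hs2 : s ^ 2 = 2 := Real.sq_sqrt two_pos.le
  set F : ℝ → ℝ := fun z => (max (δ * z - M) 0) ^ p * φ z with hFdef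
  set g : ℝ → ℝ := fun z => (max z 0) ^ p * φ z with hgdef
  set I : ℝ := ∫ z, |z| ^ p ∂(gaussianReal 0 1) with hIdef
  -- integrability of the absolute moment
  have habs : Integrable (fun z => |z| ^ p * φ z) := by
    have heq : (fun z : ℝ => |z| ^ p * φ z)
        = fun z => (Real.sqrt (2*π))⁻¹ * (|z| ^ p * Real.exp (-(1/2) * z ^ 2)) :=
      funext fun z => by rw [hφ]; ring
    rw [heq]
    exact (aux_integrable hp0' one_half_pos).const_mul _
  -- measurability helpers
  have hFmeas : Measurable F := by
    apply Measurable.mul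
    · exact (((measurable_id'.const_mul δ).sub_const M).max measurable_const).pow measurable_const
    · exact measurable_gaussianPDFReal 0 1
  have hgmeas : Measurable g := by
    apply Measurable.mul
    · exact (measurable_id'.max measurable_const).pow measurable_const
    · exact measurable_gaussianPDFReal 0 1
  have hFnonneg : ∀ z, 0 ≤ F z := fun z =>
    mul_nonneg (Real.rpow_nonneg (le_max_right _ _) p) (hφpos z)
  have hgnonneg : ∀ z, 0 ≤ g z := fun z =>
    mul_nonneg (Real.rpow_nonneg (le_max_right _ _) p) (hφpos z)
  have hF_le : ∀ z, F z ≤ δ ^ p * (|z| ^ p * φ z) := by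
    intro z
    have h1 : max (δ * z - M) 0 ≤ δ * |z| := by
      apply max_le
      · have := mul_le_mul_of_nonneg_left (le_abs_self z) hδ.le
        linarith
      · positivity
    have h2 : (max (δ * z - M) 0) ^ p ≤ (δ * |z|) ^ p :=
      Real.rpow_le_rpow (le_max_right _ _) h1 hp0'
    have h3 : (δ * |z|) ^ p = δ ^ p * |z| ^ p := Real.mul_rpow hδ.le (abs_nonneg z)
    calc F z ≤ (δ * |z|) ^ p * φ z := mul_le_mul_of_nonneg_right h2 (hφpos z)
      _ = δ ^ p * (|z| ^ p * φ z) := by rw [h3]; ring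
  have hFint : Integrable F := by
    refine (habs.const_mul (δ ^ p)).mono' hFmeas.aestronglyMeasurable
      (ae_of_all _ fun z => ?_)
    rw [Real.norm_eq_abs, abs_of_nonneg (hFnonneg z)]
    exact hF_le z
  have hgint : Integrable g := by
    refine habs.mono' hgmeas.aestronglyMeasurable (ae_of_all _ fun z => ?_)
    rw [Real.norm_eq_abs, abs_of_nonneg (hgnonneg z)]
    have h1 : (max z 0) ^ p ≤ |z| ^ p :=
      Real.rpow_le_rpow (le_max_right _ _) (max_le (le_abs_self z) (abs_nonneg z)) hp0'
    exact mul_le_mul_of_nonneg_right h1 (hφpos z)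
  -- symmetry: ∫ g = I / 2
  have hsum : ∀ z : ℝ, g z + g (-z) = |z| ^ p * φ z := by
    intro z
    have hφe := hφeven z
    rcases le_total 0 z with h | h
    · rw [hgdef]
      simp only
      rw [max_eq_left h, max_eq_right (neg_nonpos_of_nonneg h), Real.zero_rpow hp0.ne',
        abs_of_nonneg h, hφe]
      ring
    · rw [hgdef]
      simp only
      rw [max_eq_right h, max_eq_left (neg_nonneg_of_nonpos h), Real.zero_rpow hp0.ne',
        abs_of_nonpos h, hφe]
      ring
  have hgI : ∫ z, g z = I / 2 := by
    have h1 : I = ∫ z, |z| ^ p * φ z := gauss_int_eq _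
    have h2 : ∫ z, g (-z) = ∫ z, g z := integral_neg_eq_self g volume
    have h3 : Integrable (fun z => g (-z)) := hgint.comp_neg
    have h4 := integral_add hgint h3
    rw [h2] at h4
    have h5 : ∫ a : ℝ, (g a + g (-a)) = I := by
      rw [h1]
      exact integral_congr_ae (Filter.Eventually.of_forall hsum)
    rw [h5] at h4
    linarith
  -- change of variables
  have hcov : ∫ z, F z = s⁻¹ * ∫ u, F (s⁻¹ * u + m) := by
    have h1 : ∫ u, F (s⁻¹ * u + m) = |s⁻¹⁻¹| • ∫ y, F (y + m) :=
      Measure.integral_comp_mul_left (fun y => F (y + m)) s⁻¹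
    have h2 : ∫ y, F (y + m) = ∫ y, F y := integral_add_right_eq_self F m
    rw [h2, inv_inv, abs_of_pos hs, smul_eq_mul] at h1
    rw [h1]
    field_simp
  -- pointwise bound
  have hpt : ∀ u : ℝ, Real.exp (-m ^ 2) * ((δ / s) ^ p * g u) ≤ F (s⁻¹ * u + m) := by
    intro u
    have hsinv2 : (s⁻¹) ^ 2 = 2⁻¹ := by rw [inv_pow, hs2]
    have e1 : δ * (s⁻¹ * u + m) - M = (δ / s) * u := by
      rw [mul_add, hδm]; ring
    have e2 : max ((δ / s) * u) 0 = (δ / s) * max u 0 := by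
      rw [mul_max_of_nonneg _ _ (by positivity : (0:ℝ) ≤ δ / s), mul_zero]
    have e3 : (max ((δ / s) * u) 0) ^ p = (δ / s) ^ p * (max u 0) ^ p := by
      rw [e2, Real.mul_rpow (by positivity) (le_max_right _ _)]
    have hexp : Real.exp (-m ^ 2) * φ u ≤ φ (s⁻¹ * u + m) := by
      rw [hφ, hφ]
      rw [mul_comm (Real.exp (-m ^ 2)) _, mul_assoc, ← Real.exp_add]
      apply mul_le_mul_of_nonneg_left _ (by positivity)
      apply Real.exp_le_exp.mpr
      nlinarith [sq_nonneg (s⁻¹ * u - m), hsinv2]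
    calc Real.exp (-m ^ 2) * ((δ / s) ^ p * g u)
        = (δ / s) ^ p * (max u 0) ^ p * (Real.exp (-m ^ 2) * φ u) := by
          rw [hgdef]; ring
      _ ≤ (δ / s) ^ p * (max u 0) ^ p * φ (s⁻¹ * u + m) := by
          apply mul_le_mul_of_nonneg_left hexp
          positivity
      _ = F (s⁻¹ * u + m) := by
          rw [hFdef]
          simp only
          rw [e1, e3]
  -- integrate the pointwise bound
  have hcomp_int : Integrable (fun u => F (s⁻¹ * u + m)) :=
    (hFint.comp_add_right m).comp_mul_left' (inv_ne_zero hs.ne')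
  have hmono : Real.exp (-m ^ 2) * ((δ / s) ^ p * (I / 2)) ≤ ∫ u, F (s⁻¹ * u + m) := by
    have h1 : ∫ u, Real.exp (-m ^ 2) * ((δ / s) ^ p * g u)
        = Real.exp (-m ^ 2) * ((δ / s) ^ p * ∫ u, g u) := by
      rw [integral_const_mul, integral_const_mul]
    have h2 := integral_mono ((hgint.const_mul _).const_mul _) hcomp_int hpt
    rw [h1, hgI] at h2
    exact h2
  -- key scalar identity
  have hkey : s⁻¹ * (δ / s) ^ p = δ ^ p * (2:ℝ) ^ (-(p + 1) / 2) := by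
    have h2s : s = (2:ℝ) ^ ((1:ℝ)/2) := Real.sqrt_eq_rpow 2
    rw [Real.div_rpow hδ.le hs.le, h2s]
    have e1 : (((2:ℝ) ^ ((1:ℝ)/2))⁻¹ : ℝ) = (2:ℝ) ^ (-((1:ℝ)/2)) := by
      rw [← Real.rpow_neg (by norm_num : (0:ℝ) ≤ 2)]
    have e2 : (((2:ℝ) ^ ((1:ℝ)/2)) ^ p) = (2:ℝ) ^ (p/2) := by
      rw [← Real.rpow_mul (by norm_num : (0:ℝ) ≤ 2)]
      ring_nf
    rw [e1, e2, div_eq_mul_inv (δ ^ p), ← Real.rpow_neg (by norm_num : (0:ℝ) ≤ 2),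
      show (-(p + 1) / 2 : ℝ) = -((1:ℝ)/2) + -(p/2) by ring,
      Real.rpow_add two_pos]
    ring
  -- assemble
  have hLHS : (∫ z, (max (δ * z - M) 0) ^ p ∂(gaussianReal 0 1)) = ∫ z, F z := gauss_int_eq _
  rw [ge_iff_le, hLHS, hcov]
  by_cases hI0 : I = 0
  · rw [hc, hI0]
    have h0 : (0:ℝ) ≤ ∫ u, F (s⁻¹ * u + m) := integral_nonneg fun u => hFnonneg _
    simp only [inv_zero, mul_zero, div_zero, zero_div, one_div]
    positivity
  · have hIc : 1 / (2 * c) = I / 2 := by rw [hc]; field_simp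
    rw [hIc]
    calc δ ^ p * rexp (-m ^ 2) * (2:ℝ) ^ (-(p + 1) / 2) * (I / 2)
        = s⁻¹ * (rexp (-m ^ 2) * ((δ / s) ^ p * (I / 2))) := by
          linear_combination (-(rexp (-m ^ 2) * (I / 2))) * hkey
      _ ≤ s⁻¹ * ∫ u, F (s⁻¹ * u + m) :=
          mul_le_mul_of_nonneg_left hmono (by positivity)
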